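/- Let g : ℝ → ℝ denote the ReLU activation g(z) = z·𝟙(z ≥ 0), and let ε > 0. Then for any β₀, β₁ ∈ ℝ, ∫_{−ε}^{ε} |(β₀ + β₁ w) − g(w)| dw ≥ ε²/8. -/

import Mathlib

/-!
Testing against the step function that is `+1` on `[-ε/2, ε/2]` and `-1` elsewhere kills every
affine function (it has mean zero and is even), while it pairs with `relu` to `-ε²/4`. Hence
`ε²/4 ≤ ∫ |affine - relu|`. Concretely, on each of the four quarters of `[-ε, ε]` the integrand is
`|affine|`, bounded below by `|∫ affine|`, and the signed sum of these four integrals is `ε²/4`.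
-/

open MeasureTheory intervalIntegral

/-- ReLU activation g(z) = z·𝟙(z ≥ 0). -/
noncomputable def relu (z : ℝ) : ℝ := if 0 ≤ z then z else 0

lemma relu_of_nonneg {z : ℝ} (hz : 0 ≤ z) : relu z = z := if_pos hz

lemma relu_of_nonpos {z : ℝ} (hz : z ≤ 0) : relu z = 0 := by
  rcases hz.lt_or_eq with hz | rfl
  · exact if_neg hz.not_ge
  · exact if_pos le_rfl

lemma relu_eq_max (z : ℝ) : relu z = max z 0 := by
  rcases le_total 0 z with hz | hz
  · rw [relu_of_nonneg hz, max_eq_left hz]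
  · rw [relu_of_nonpos hz, max_eq_right hz]

lemma continuous_relu : Continuous relu := by
  simpa only [funext relu_eq_max] using continuous_id'.max continuous_const

lemma integral_affine (a b c d : ℝ) :
    ∫ w in a..b, (c + d * w) = c * (b - a) + d * ((b ^ 2 - a ^ 2) / 2) := by
  rw [integral_add intervalIntegrable_const ((continuous_const_mul d).intervalIntegrable a b),
    intervalIntegral.integral_const,
    intervalIntegral.integral_const_mul, integral_id, smul_eq_mul]
  ring

lemma abs_integral_affine_le {a b : ℝ} (hab : a ≤ b) (c d : ℝ) :
    |c * (b - a) + d * ((b ^ 2 - a ^ 2) / 2)| ≤ ∫ w in a..b, |c + d * w| := by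
  rw [← integral_affine]
  exact abs_integral_le_integral_abs hab

section

variable (β₀ β₁ : ℝ) {a b : ℝ}

lemma abs_integral_affine_le_integral_abs_sub_relu_of_nonpos (hab : a ≤ b) (hb : b ≤ 0) :
    |β₀ * (b - a) + β₁ * ((b ^ 2 - a ^ 2) / 2)| ≤ ∫ w in a..b, |β₀ + β₁ * w - relu w| := by
  refine (abs_integral_affine_le hab β₀ β₁).trans_eq (integral_congr fun w hw => ?_)
  rw [Set.uIcc_of_le hab] at hw
  rw [relu_of_nonpos (hw.2.trans hb), sub_zero]

lemma abs_integral_affine_le_integral_abs_sub_relu_of_nonneg (ha : 0 ≤ a) (hab : a ≤ b) :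
    |β₀ * (b - a) + (β₁ - 1) * ((b ^ 2 - a ^ 2) / 2)| ≤ ∫ w in a..b, |β₀ + β₁ * w - relu w| := by
  refine (abs_integral_affine_le hab β₀ (β₁ - 1)).trans_eq (integral_congr fun w hw => ?_)
  rw [Set.uIcc_of_le hab] at hw
  rw [relu_of_nonneg (ha.trans hw.1)]
  congr 1
  ring

theorem sq_div_four_le_integral_abs_affine_sub_relu {ε : ℝ} (hε : 0 ≤ ε) :
    ε ^ 2 / 4 ≤ ∫ w in (-ε)..ε, |β₀ + β₁ * w - relu w| := by
  have hint : ∀ s t : ℝ, IntervalIntegrable (fun w => |β₀ + β₁ * w - relu w|) volume s t :=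
    fun s t => (((continuous_const.add (continuous_const_mul β₁)).sub continuous_relu).abs
      ).intervalIntegrable s t
  rw [← integral_add_adjacent_intervals (hint _ 0) (hint 0 _),
    ← integral_add_adjacent_intervals (hint _ (-ε / 2)) (hint _ 0),
    ← integral_add_adjacent_intervals (hint 0 (ε / 2)) (hint _ ε)]
  have h₁ := (neg_le_abs _).trans
    (abs_integral_affine_le_integral_abs_sub_relu_of_nonpos β₀ β₁ (a := -ε) (b := -ε / 2)
      (by linarith) (by linarith))
  have h₂ := (le_abs_self _).trans
    (abs_integral_affine_le_integral_abs_sub_relu_of_nonpos β₀ β₁ (a := -ε / 2) (b := 0)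
      (by linarith) le_rfl)
  have h₃ := (le_abs_self _).trans
    (abs_integral_affine_le_integral_abs_sub_relu_of_nonneg β₀ β₁ (a := 0) (b := ε / 2)
      le_rfl (by linarith))
  have h₄ := (neg_le_abs _).trans
    (abs_integral_affine_le_integral_abs_sub_relu_of_nonneg β₀ β₁ (a := ε / 2) (b := ε)
      (by linarith) (by linarith))
  linarith

end

theorem stmt_5 (ε : ℝ) (hε : 0 < ε) (β₀ β₁ : ℝ) :
    ε^2 / 8 ≤ ∫ w in Set.Icc (-ε) ε, |(β₀ + β₁ * w) - relu w| := by
  rw [integral_Icc_eq_integral_Ioc, ← integral_of_le (by linarith)]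
  have := sq_div_four_le_integral_abs_affine_sub_relu β₀ β₁ hε.le
  linarith [sq_nonneg ε]
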